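/- For every integer n ≥ 3, the lower broadcast packing number of the cycle C_n equals n/4 if n ≡ 0 (mod 8), equals 2⌊n/8⌋ + 1 if n ≡ 1, 2 or 3 (mod 8), and equals 2⌊n/8⌋ + 2 if n ≡ 4, 5, 6 or 7 (mod 8). -/

import Mathlib

/-!
Order the broadcast vertices of a maximal packing broadcast `f` of `C_n` around the cycle. The
gap from a broadcast vertex `v` to the next one `w` has length at least `f v + f w + 1`, since
`f` is a packing, and at most `f v + f w + 3`, since otherwise a new broadcast vertex of
strength 1 fits in between. Moreover every broadcast vertex borders a gap of the minimal length,
since otherwise `f v` could be raised. At most half of the gaps are therefore longer than the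
minimum, and summing the gaps gives `n ≤ 4 σ(f)`, strictly if `σ(f)` is odd. Conversely,
broadcasts of strength 1 whose gaps come in runs of 3 and pairs `3, 4` or `3, 5` are maximal
packings attaining this bound once `n ≥ 6`; for `n ≤ 5` a single vertex broadcasting at
strength `n / 2` does.
-/

open SimpleGraph

namespace Broadcast

variable {V : Type*} [Fintype V]

/-- The eccentricity of a vertex: the maximum distance from `v` to any vertex. -/
noncomputable def ecc (G : SimpleGraph V) (v : V) : ℕ :=
  Finset.univ.sup fun u => G.dist v u

/-- A broadcast on `G`: `f v ≤ e_G(v)` for every vertex `v`. -/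
def IsBroadcast (G : SimpleGraph V) (f : V → ℕ) : Prop :=
  ∀ v, f v ≤ ecc G v

/-- The cost of a broadcast. -/
def cost (f : V → ℕ) : ℕ := ∑ v, f v

/-- `hears G f u` is H_f(u): the set of f-broadcast vertices `v` with `d(u,v) ≤ f v`. -/
def hears (G : SimpleGraph V) (f : V → ℕ) (u : V) : Set V :=
  {v | 1 ≤ f v ∧ G.dist u v ≤ f v}

/-- A dominating broadcast: every vertex hears some broadcast vertex. -/
def IsDominating (G : SimpleGraph V) (f : V → ℕ) : Prop :=
  IsBroadcast G f ∧ ∀ u, (hears G f u).Nonempty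

/-- A minimal dominating broadcast. -/
def IsMinimalDominating (G : SimpleGraph V) (f : V → ℕ) : Prop :=
  IsDominating G f ∧ ∀ g, IsDominating G g → (∀ v, g v ≤ f v) → g = f

/-- The broadcast domination number γ_b: minimum cost of a dominating broadcast. -/
noncomputable def broadcastDomination (G : SimpleGraph V) : ℕ :=
  sInf {c | ∃ f, IsDominating G f ∧ cost f = c}

/-- The upper broadcast domination number Γ_b: maximum cost of a minimal dominating broadcast. -/
noncomputable def upperBroadcastDomination (G : SimpleGraph V) : ℕ :=
  sSup {c | ∃ f, IsMinimalDominating G f ∧ cost f = c}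

/-- The private f-neighborhood PN_f(v): vertices hearing only `v`. -/
def privateNbhd (G : SimpleGraph V) (f : V → ℕ) (v : V) : Set V :=
  {u | hears G f u = {v}}

open Classical in
/-- The private f-border PB_f(v). -/
noncomputable def privateBorder (G : SimpleGraph V) (f : V → ℕ) (v : V) : Set V :=
  if f v = 1 ∧ privateNbhd G f v = {v} then {v}
  else {u | u ∈ privateNbhd G f v ∧ G.dist u v = f v}

/-- An irredundant broadcast: every broadcast vertex has a nonempty private border. -/
def IsIrredundant (G : SimpleGraph V) (f : V → ℕ) : Prop :=
  IsBroadcast G f ∧ ∀ v, 1 ≤ f v → (privateBorder G f v).Nonempty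

/-- A maximal irredundant broadcast. -/
def IsMaximalIrredundant (G : SimpleGraph V) (f : V → ℕ) : Prop :=
  IsIrredundant G f ∧ ∀ g, IsIrredundant G g → (∀ v, f v ≤ g v) → g = f

/-- The upper broadcast irredundance number IR_b: maximum cost of an irredundant broadcast. -/
noncomputable def upperBroadcastIrredundance (G : SimpleGraph V) : ℕ :=
  sSup {c | ∃ f, IsIrredundant G f ∧ cost f = c}

/-- The broadcast irredundance number ir_b: minimum cost of a maximal irredundant broadcast. -/
noncomputable def broadcastIrredundance (G : SimpleGraph V) : ℕ :=
  sInf {c | ∃ f, IsMaximalIrredundant G f ∧ cost f = c}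

/-- An independent broadcast: every broadcast vertex hears only itself, i.e. |H_f(v)| = 1. -/
def IsIndependent (G : SimpleGraph V) (f : V → ℕ) : Prop :=
  IsBroadcast G f ∧ ∀ v, 1 ≤ f v → hears G f v = {v}

/-- A maximal independent broadcast. -/
def IsMaximalIndependent (G : SimpleGraph V) (f : V → ℕ) : Prop :=
  IsIndependent G f ∧ ∀ g, IsIndependent G g → (∀ v, f v ≤ g v) → g = f

/-- The broadcast independence number β_b: maximum cost of an independent broadcast. -/
noncomputable def broadcastIndependence (G : SimpleGraph V) : ℕ :=
  sSup {c | ∃ f, IsIndependent G f ∧ cost f = c}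

/-- The lower broadcast independence number i_b: minimum cost of a maximal independent broadcast. -/
noncomputable def lowerBroadcastIndependence (G : SimpleGraph V) : ℕ :=
  sInf {c | ∃ f, IsMaximalIndependent G f ∧ cost f = c}

/-- A packing broadcast: every vertex hears at most one broadcast vertex. -/
def IsPacking (G : SimpleGraph V) (f : V → ℕ) : Prop :=
  IsBroadcast G f ∧ ∀ u, (hears G f u).Subsingleton

/-- A maximal packing broadcast. -/
def IsMaximalPacking (G : SimpleGraph V) (f : V → ℕ) : Prop :=
  IsPacking G f ∧ ∀ g, IsPacking G g → (∀ v, f v ≤ g v) → g = f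

/-- The broadcast packing number P_b: maximum cost of a packing broadcast. -/
noncomputable def broadcastPacking (G : SimpleGraph V) : ℕ :=
  sSup {c | ∃ f, IsPacking G f ∧ cost f = c}

/-- The lower broadcast packing number p_b: minimum cost of a maximal packing broadcast. -/
noncomputable def lowerBroadcastPacking (G : SimpleGraph V) : ℕ :=
  sInf {c | ∃ f, IsMaximalPacking G f ∧ cost f = c}

end Broadcast

open Fin.NatCast

namespace Fin

variable {n : ℕ} [NeZero n]

/-- `(y - x).val` is the length of the arc from `x` forward to `y` on `C_n`; arc lengths add up
to a full turn. -/
lemma val_sub_add_val_sub (o x y : Fin n) :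
    (y - x).val + (x - o).val = (y - o).val ∨ (y - x).val + (x - o).val = (y - o).val + n := by
  have h := val_add_eq_ite (y - x) (x - o)
  rw [sub_add_sub_cancel] at h
  split_ifs at h <;> omega

lemma val_sub_add_val_sub_comm (x y : Fin n) :
    (x - y).val + (y - x).val = 0 ∨ (x - y).val + (y - x).val = n := by
  simpa using val_sub_add_val_sub x y x

lemma val_sub_eq_zero_iff {x y : Fin n} : (x - y).val = 0 ↔ x = y := by
  rw [val_eq_zero_iff, sub_eq_zero]

end Fin

namespace SimpleGraph

variable {n : ℕ} [NeZero n]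

lemma cycleGraph_connected_of_neZero : (cycleGraph n).Connected := by
  obtain ⟨m, rfl⟩ := Nat.exists_eq_succ_of_ne_zero (NeZero.ne n)
  exact cycleGraph_connected

lemma dist_cycleGraph_add_one_le (x : Fin n) : (cycleGraph n).dist x (x + 1) ≤ 1 := by
  rcases Nat.lt_or_ge 1 n with hn | hn
  · refine (dist_eq_one_iff_adj.2 (cycleGraph_adj'.2 (Or.inr ?_))).le
    simp [Nat.mod_eq_of_lt hn]
  · have : Subsingleton (Fin n) := Fin.subsingleton_iff_le_one.2 hn
    simp [Subsingleton.elim (x + 1) x]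

lemma dist_cycleGraph_add_natCast_le (x : Fin n) (k : ℕ) :
    (cycleGraph n).dist x (x + (k : Fin n)) ≤ k := by
  induction k with
  | zero => simp
  | succ k ih =>
    have := cycleGraph_connected_of_neZero.dist_triangle (u := x) (v := x + (k : Fin n))
      (w := x + (k : Fin n) + 1)
    have := dist_cycleGraph_add_one_le (x + (k : Fin n))
    rw [Nat.cast_add, Nat.cast_one, ← add_assoc]
    omega

lemma dist_cycleGraph_le_val_sub (x y : Fin n) : (cycleGraph n).dist x y ≤ (y - x).val := by
  simpa using dist_cycleGraph_add_natCast_le x (y - x).val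

lemma cycleGraph_min_val_sub_le_of_adj {x y : Fin n} (hxy : (cycleGraph n).Adj x y) (z : Fin n) :
    min (z - x).val (x - z).val ≤ min (z - y).val (y - z).val + 1 := by
  rw [cycleGraph_adj'] at hxy
  have := Fin.val_sub_add_val_sub_comm x z
  have := Fin.val_sub_add_val_sub_comm y z
  have := Fin.val_sub_add_val_sub x y z
  have := Fin.val_sub_add_val_sub y x z
  have := Fin.isLt (z - x)
  have := Fin.isLt (z - y)
  have := Fin.isLt (x - z)
  have := Fin.isLt (y - z)
  omega

lemma cycleGraph_min_val_sub_le_length {x y : Fin n} (p : (cycleGraph n).Walk x y) :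
    min (y - x).val (x - y).val ≤ p.length := by
  induction p with
  | nil => simp
  | @cons u v w h p ih =>
    have := cycleGraph_min_val_sub_le_of_adj h w
    rw [Walk.length_cons]
    omega

lemma dist_cycleGraph (x y : Fin n) :
    (cycleGraph n).dist x y = min (y - x).val (x - y).val := by
  refine le_antisymm (le_min (dist_cycleGraph_le_val_sub x y) ?_) ?_
  · rw [dist_comm]
    exact dist_cycleGraph_le_val_sub y x
  · obtain ⟨p, hp⟩ := cycleGraph_connected_of_neZero.exists_walk_length_eq_dist x y
    exact hp ▸ cycleGraph_min_val_sub_le_length p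

end SimpleGraph

namespace Broadcast

open Finset

section General

variable {V : Type*} [Fintype V] {G : SimpleGraph V} {f : V → ℕ}

lemma dist_le_ecc (G : SimpleGraph V) (v u : V) : G.dist v u ≤ ecc G v :=
  le_sup (f := fun u => G.dist v u) (mem_univ u)

/-- The set `V_f^+` of broadcast vertices. -/
def broadcastVertices (f : V → ℕ) : Finset V := {v | 1 ≤ f v}

lemma mem_broadcastVertices {v : V} : v ∈ broadcastVertices f ↔ 1 ≤ f v := by
  simp [broadcastVertices]

lemma cost_eq_sum_broadcastVertices : cost f = ∑ v ∈ broadcastVertices f, f v := by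
  rw [cost, broadcastVertices, sum_filter_of_ne fun v _ hv => by omega]

lemma IsPacking.eq_of_dist_le (hf : IsPacking G f) {u x y : V} (hx : 1 ≤ f x) (hy : 1 ≤ f y)
    (hux : G.dist u x ≤ f x) (huy : G.dist u y ≤ f y) : x = y :=
  hf.2 u ⟨hx, hux⟩ ⟨hy, huy⟩

/-- Raising `f v` by one must break the packing property. -/
lemma IsMaximalPacking.exists_conflict [DecidableEq V] (hf : IsMaximalPacking G f) {v : V}
    (hv : f v < ecc G v) :
    ∃ y x, x ≠ v ∧ 1 ≤ f x ∧ G.dist y x ≤ f x ∧ G.dist y v ≤ f v + 1 := by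
  by_contra! h
  set g := Function.update f v (f v + 1)
  have hg : IsPacking G g := by
    refine ⟨fun u => ?_, fun y x₁ h₁ x₂ h₂ => ?_⟩
    · rcases eq_or_ne u v with rfl | hu
      · simpa [g] using hv
      · simpa [g, hu] using hf.1.1 u
    · have hv_only : ∀ a b, a ∈ hears G g y → b ∈ hears G g y → a = v → b = v := by
        rintro a b ⟨-, ha⟩ ⟨hb, hb'⟩ rfl
        by_contra hbv
        simp only [g, Function.update_self, Function.update_of_ne hbv] at ha hb hb'
        exact (h y b hbv hb hb').not_ge ha
      rcases eq_or_ne x₁ v with rfl | hx₁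
      · exact (hv_only _ _ h₁ h₂ rfl).symm
      rcases eq_or_ne x₂ v with rfl | hx₂
      · exact hv_only _ _ h₂ h₁ rfl
      obtain ⟨h₁, h₁'⟩ := h₁
      obtain ⟨h₂, h₂'⟩ := h₂
      simp only [g, Function.update_of_ne hx₁, Function.update_of_ne hx₂] at h₁ h₁' h₂ h₂'
      exact hf.1.eq_of_dist_le h₁ h₂ h₁' h₂'
  have := congrFun (hf.2 g hg fun u => ?_) v
  · simp [g] at this
  · rcases eq_or_ne u v with rfl | hu <;> simp [g, *]

lemma IsMaximalPacking.broadcastVertices_nonempty [DecidableEq V] (hf : IsMaximalPacking G f)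
    {v : V} (hv : 1 ≤ ecc G v) : (broadcastVertices f).Nonempty := by
  by_cases hfv : 1 ≤ f v
  · exact ⟨v, mem_broadcastVertices.2 hfv⟩
  · obtain ⟨-, x, -, hx, -⟩ := hf.exists_conflict (v := v) (by omega)
    exact ⟨x, mem_broadcastVertices.2 hx⟩

lemma IsMaximalPacking.apply_eq_ecc [DecidableEq V] (hf : IsMaximalPacking G f) {v : V}
    (hS : broadcastVertices f = {v}) : f v = ecc G v := by
  refine (hf.1.1 v).antisymm (not_lt.1 fun hv => ?_)
  obtain ⟨-, x, hxv, hx, -⟩ := hf.exists_conflict hv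
  rw [← mem_broadcastVertices, hS, mem_singleton] at hx
  exact hxv hx

lemma isMaximalPacking_single [DecidableEq V] {v : V} (hv : 1 ≤ ecc G v) :
    IsMaximalPacking G (Pi.single v (ecc G v)) := by
  have hsupp : ∀ x, 1 ≤ Pi.single (M := fun _ => ℕ) v (ecc G v) x → x = v := by
    intro x hx
    by_contra hxv
    simp [Pi.single_eq_of_ne hxv] at hx
  refine ⟨⟨fun u => ?_, fun y x₁ h₁ x₂ h₂ => (hsupp _ h₁.1).trans (hsupp _ h₂.1).symm⟩,
    fun g hg hfg => funext fun u => ?_⟩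
  · rcases eq_or_ne u v with rfl | hu <;> simp [*]
  · have hgv : g v = ecc G v := (hg.1 v).antisymm (by simpa using hfg v)
    rcases eq_or_ne u v with rfl | hu
    · simpa using hgv
    · rw [Pi.single_eq_of_ne hu]
      by_contra hgu
      refine hu (hg.eq_of_dist_le (u := u) (by omega) (by omega) (by simp) ?_)
      rw [hgv, dist_comm]
      exact dist_le_ecc G v u

lemma cost_single [DecidableEq V] (v : V) (c : ℕ) : cost (Pi.single v c) = c := by
  simp [cost]

lemma isMaximalPacking_indicator [DecidableEq V] (hG : G.Connected) (C : Finset V)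
    (hecc : ∀ v ∈ C, 1 ≤ ecc G v) (hsep : ∀ x ∈ C, ∀ y ∈ C, x ≠ y → 3 ≤ G.dist x y)
    (hnear : ∀ y ∉ C, ∃ w ∈ C, ∃ t, G.dist t y ≤ 1 ∧ G.dist t w ≤ 1)
    (hpair : ∀ y ∈ C, ∃ w ∈ C, w ≠ y ∧ ∃ t, G.dist t y ≤ 2 ∧ G.dist t w ≤ 1) :
    IsMaximalPacking G fun v => if v ∈ C then 1 else 0 := by
  refine ⟨⟨fun u => ?_, fun y x₁ h₁ x₂ h₂ => ?_⟩, fun g hg hfg => funext fun u => ?_⟩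
  · dsimp only
    split_ifs with hu
    · exact hecc u hu
    · exact Nat.zero_le _
  · obtain ⟨h₁, h₁'⟩ := h₁
    obtain ⟨h₂, h₂'⟩ := h₂
    dsimp only at h₁ h₁' h₂ h₂'
    split_ifs at h₁ h₁' h₂ h₂' with hx₁ hx₂ <;> try omega
    by_contra hne
    have := hsep x₁ hx₁ x₂ hx₂ hne
    have := hG.dist_triangle (u := x₁) (v := y) (w := x₂)
    rw [dist_comm] at h₁'
    omega
  · have hgw : ∀ w ∈ C, 1 ≤ g w := fun w hw => by simpa [hw] using hfg w
    have hfu := hfg u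
    by_contra hne
    dsimp only at hfu hne
    split_ifs at hfu hne with hu
    · obtain ⟨w, hw, hwu, t, htu, htw⟩ := hpair u hu
      exact hwu (hg.eq_of_dist_le (hgw w hw) (by omega) (htw.trans (hgw w hw)) (by omega))
    · obtain ⟨w, hw, t, htu, htw⟩ := hnear u hu
      have huw : u = w := hg.eq_of_dist_le (by omega) (hgw w hw) (by omega) (htw.trans (hgw w hw))
      exact hu (huw ▸ hw)

lemma cost_indicator [DecidableEq V] (C : Finset V) :
    cost (fun v => if v ∈ C then 1 else 0) = #C := by
  simp [cost]

lemma lowerBroadcastPacking_le (hf : IsMaximalPacking G f) : lowerBroadcastPacking G ≤ cost f :=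
  Nat.sInf_le ⟨f, hf, rfl⟩

lemma exists_cost_eq_lowerBroadcastPacking (hf : IsMaximalPacking G f) :
    ∃ g, IsMaximalPacking G g ∧ cost g = lowerBroadcastPacking G :=
  Nat.sInf_mem (s := {c | ∃ f, IsMaximalPacking G f ∧ cost f = c}) ⟨_, f, hf, rfl⟩

end General

section Successor

variable {n : ℕ} {S : Finset (Fin n)} {v w : Fin n}

def IsCyclicSucc (S : Finset (Fin n)) (v w : Fin n) : Prop :=
  w ∈ S ∧ w ≠ v ∧ ∀ x ∈ S, x ≠ v → (w - v).val ≤ (x - v).val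

lemma exists_isCyclicSucc (h : ∃ x ∈ S, x ≠ v) : ∃ w, IsCyclicSucc S v w := by
  obtain ⟨x, hx, hxv⟩ := h
  obtain ⟨w, hw, hmin⟩ :=
    (S.erase v).exists_min_image (fun x => (x - v).val) ⟨x, mem_erase.2 ⟨hxv, hx⟩⟩
  rw [mem_erase] at hw
  exact ⟨w, hw.2, hw.1, fun x hx hxv => hmin x (mem_erase.2 ⟨hxv, hx⟩)⟩

variable [NeZero n]

lemma IsCyclicSucc.unique {w' : Fin n} (h : IsCyclicSucc S v w) (h' : IsCyclicSucc S v w') :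
    w = w' :=
  sub_left_injective (b := v) <| Fin.ext <| (h.2.2 w' h'.1 h'.2.1).antisymm (h'.2.2 w h.1 h.2.1)

lemma IsCyclicSucc.inj {v' : Fin n} (h : IsCyclicSucc S v w) (h' : IsCyclicSucc S v' w) (hv : v ∈ S)
    (hv' : v' ∈ S) : v = v' := by
  by_contra hne
  have := h.2.2 v' hv' (Ne.symm hne)
  have := h'.2.2 v hv hne
  have := Fin.val_sub_add_val_sub v v' w
  have := Fin.val_sub_add_val_sub_comm v v'
  have := Fin.val_sub_eq_zero_iff.not.2 h.2.1
  have := Fin.val_sub_eq_zero_iff.not.2 h'.2.1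
  have := Fin.val_sub_eq_zero_iff.not.2 hne
  omega

variable {next : Fin n → Fin n}

lemma injOn_of_isCyclicSucc (hnext : ∀ v ∈ S, IsCyclicSucc S v (next v)) : Set.InjOn next S :=
  fun v hv v' hv' h => (hnext v hv).inj (h ▸ hnext v' hv') hv hv'

lemma existsUnique_val_sub_lt (hS : S.Nonempty) (hnext : ∀ v ∈ S, IsCyclicSucc S v (next v))
    (x : Fin n) : ∃! v, v ∈ S ∧ (x - v).val < (next v - v).val := by
  obtain ⟨v, hv, hmin⟩ := S.exists_min_image (fun v => (x - v).val) hS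
  have hlt : (x - v).val < (next v - v).val := by
    by_contra! hle
    obtain ⟨hw, hwv, -⟩ := hnext v hv
    have := hmin _ hw
    have := Fin.val_sub_add_val_sub v (next v) x
    have := (x - next v).isLt
    have := Fin.val_sub_eq_zero_iff.not.2 hwv
    omega
  refine ⟨v, ⟨hv, hlt⟩, fun v' ⟨hv', hlt'⟩ => ?_⟩
  by_contra hne
  have := (hnext v hv).2.2 v' hv' hne
  have := (hnext v' hv').2.2 v hv (Ne.symm hne)
  have := Fin.val_sub_add_val_sub v v' x
  have := Fin.val_sub_add_val_sub_comm v v'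
  have := Fin.val_sub_eq_zero_iff.not.2 hne
  omega

lemma card_filter_val_sub_lt (v : Fin n) {m : ℕ} (hm : m ≤ n) :
    #{x : Fin n | (x - v).val < m} = m := by
  rw [card_equiv (Equiv.subRight v) (t := {y : Fin n | y.val < m}) (by simp),
    Fin.card_filter_val_lt, min_eq_right hm]

lemma sum_val_sub_succ (hS : S.Nonempty) (hnext : ∀ v ∈ S, IsCyclicSucc S v (next v)) :
    ∑ v ∈ S, (next v - v).val = n := by
  calc ∑ v ∈ S, (next v - v).val
      = ∑ v ∈ S, #{x : Fin n | (x - v).val < (next v - v).val} :=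
        sum_congr rfl fun v _ => (card_filter_val_sub_lt v (next v - v).isLt.le).symm
    _ = ∑ x : Fin n, #{v ∈ S | (x - v).val < (next v - v).val} := by
        simp only [card_filter]
        exact sum_comm
    _ = ∑ x : Fin n, 1 := sum_congr rfl fun x _ => card_eq_one_iff_existsUnique.2 <| by
        simpa only [mem_filter] using existsUnique_val_sub_lt hS hnext x
    _ = n := by simp

end Successor

/-- `g v` plays the gap from `v` to `next v`. Since every `v` borders a tight gap, at most half
of the gaps are loose. -/
lemma sum_add_sum_mod_two_le {ι : Type*} [DecidableEq ι] {S : Finset ι} {next : ι → ι}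
    {a g : ι → ℕ} (hmaps : Set.MapsTo next S S) (hinj : Set.InjOn next S)
    (ha : ∀ v ∈ S, 1 ≤ a v) (hg : ∀ v ∈ S, g v ≤ a v + a (next v) + 3)
    (htight : ∀ v ∈ S, g v ≤ a v + a (next v) + 1 ∨ ∃ u ∈ S, next u = v ∧ g u ≤ a u + a v + 1) :
    ∑ v ∈ S, g v + (∑ v ∈ S, a v) % 2 ≤ 4 * ∑ v ∈ S, a v := by
  set p := fun v => g v ≤ a v + a (next v) + 1
  have hnext : ∑ v ∈ S, a (next v) = ∑ v ∈ S, a v :=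
    sum_nbij next hmaps hinj (surjOn_of_injOn_of_card_le next hmaps hinj le_rfl) fun _ _ => rfl
  have hsplit_a := sum_filter_add_sum_filter_not S p a
  have hsplit_next := sum_filter_add_sum_filter_not S p (fun v => a (next v))
  have hsplit_g := sum_filter_add_sum_filter_not S p g
  have hsplit_card := card_filter_add_card_filter_not (s := S) p
  set T := S.filter p
  set U := S.filter fun v => ¬p v
  have hT : ∑ v ∈ T, g v ≤ ∑ v ∈ T, (a v + a (next v) + 1) :=
    sum_le_sum fun v hv => (mem_filter.1 hv).2
  have hU : ∑ v ∈ U, g v ≤ ∑ v ∈ U, (a v + a (next v) + 3) :=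
    sum_le_sum fun v hv => hg v (mem_filter.1 hv).1
  have hUT : #U ≤ #T := by
    refine (card_le_card fun v hv => ?_).trans (card_image_le (f := next))
    obtain ⟨hvS, hv⟩ := mem_filter.1 hv
    obtain h | ⟨u, hu, rfl, hut⟩ := htight v hvS
    · exact absurd h hv
    · exact mem_image_of_mem next (mem_filter.2 ⟨hu, hut⟩)
  have hcard : #S ≤ ∑ v ∈ S, a v := card_eq_sum_ones S ▸ sum_le_sum ha
  simp only [sum_add_distrib, sum_const, smul_eq_mul, mul_one] at hT hU
  omega

section Cycle

variable {n : ℕ} [NeZero n] {f : Fin n → ℕ}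

lemma ecc_cycleGraph (v : Fin n) : ecc (cycleGraph n) v = n / 2 := by
  refine le_antisymm (Finset.sup_le fun u _ => ?_) ?_
  · rw [dist_cycleGraph]
    have := Fin.val_sub_add_val_sub_comm u v
    omega
  · set u := v + ((n / 2 : ℕ) : Fin n)
    have hu : (u - v).val = n / 2 := by
      simp [u, Nat.mod_eq_of_lt (Nat.div_lt_self (NeZero.pos n) one_lt_two)]
    have := Fin.val_sub_add_val_sub_comm u v
    have := dist_le_ecc (cycleGraph n) v u
    rw [dist_cycleGraph] at this
    omega

lemma IsPacking.add_add_one_le_val_sub (hf : IsPacking (cycleGraph n) f) {x y : Fin n}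
    (hxy : x ≠ y) (hx : 1 ≤ f x) (hy : 1 ≤ f y) : f x + f y + 1 ≤ (y - x).val := by
  by_contra! h
  set m := min (f x) (y - x).val
  set u := x + (m : Fin n)
  have hux : (u - x).val = m := by
    rw [add_sub_cancel_left, Fin.val_natCast,
      Nat.mod_eq_of_lt ((min_le_right _ _).trans_lt (y - x).isLt)]
  have := Fin.val_sub_add_val_sub x u y
  have := (y - u).isLt
  refine hxy (hf.eq_of_dist_le (u := u) hx hy ?_ ((dist_cycleGraph_le_val_sub u y).trans ?_))
  · rw [SimpleGraph.dist_comm]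
    exact (dist_cycleGraph_le_val_sub x u).trans (by omega)
  · omega

lemma IsPacking.isCyclicSucc_of_val_sub_le (hf : IsPacking (cycleGraph n) f) {v w : Fin n}
    (hwv : w ≠ v) (hv : 1 ≤ f v) (hw : 1 ≤ f w) (h : (w - v).val ≤ f v + f w + 1) :
    IsCyclicSucc (broadcastVertices f) v w := by
  refine ⟨mem_broadcastVertices.2 hw, hwv, fun x hx hxv => ?_⟩
  rw [mem_broadcastVertices] at hx
  by_contra! hlt
  have hxw : x ≠ w := by rintro rfl; omega
  have := hf.add_add_one_le_val_sub (Ne.symm hxv) hv hx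
  have := hf.add_add_one_le_val_sub hxw hx hw
  have := Fin.val_sub_add_val_sub v x w
  have := (w - x).isLt
  omega

/-- Otherwise the vertex `f v + 2` steps after `v` could broadcast with strength 1. -/
lemma IsMaximalPacking.val_sub_le_of_isCyclicSucc (hn : 3 ≤ n)
    (hf : IsMaximalPacking (cycleGraph n) f)
    {v w : Fin n} (hv : 1 ≤ f v) (hvw : IsCyclicSucc (broadcastVertices f) v w) :
    (w - v).val ≤ f v + f w + 3 := by
  by_contra! hgap
  obtain ⟨hw, hwv, hmin⟩ := hvw
  rw [mem_broadcastVertices] at hw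
  set u := v + ((f v + 2 : ℕ) : Fin n)
  have hu : (u - v).val = f v + 2 := by
    rw [add_sub_cancel_left, Fin.val_natCast, Nat.mod_eq_of_lt (by have := (w - v).isLt; omega)]
  have huv : u ≠ v := fun h => by
    rw [h, sub_self, Fin.val_zero] at hu
    omega
  have hfu : f u = 0 := by
    by_contra h
    have := hmin u (mem_broadcastVertices.2 (by omega)) huv
    omega
  obtain ⟨y, x, hxu, hx, hyx, hyu⟩ := hf.exists_conflict (v := u) (by rw [ecc_cycleGraph]; omega)
  have hux : (cycleGraph n).dist u x ≤ f x + 1 := by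
    have := cycleGraph_connected_of_neZero.dist_triangle (u := u) (v := y) (w := x)
    rw [SimpleGraph.dist_comm] at hyu
    omega
  rw [dist_cycleGraph] at hux
  have := hf.1.add_add_one_le_val_sub hwv hw hv
  have := Fin.val_sub_add_val_sub v u x
  have := Fin.val_sub_add_val_sub v w x
  have := Fin.val_sub_add_val_sub_comm u x
  have := Fin.val_sub_add_val_sub_comm v w
  have := Fin.val_sub_add_val_sub_comm v x
  have := (x - u).isLt
  have := (x - w).isLt
  have := (x - v).isLt
  rcases eq_or_ne x v with rfl | hxv
  · omega
  rcases eq_or_ne x w with rfl | hxw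
  · omega
  have := hmin x (mem_broadcastVertices.2 hx) hxv
  have := hf.1.add_add_one_le_val_sub (Ne.symm hxw) hw hx
  have := hf.1.add_add_one_le_val_sub hxv hx hv
  omega

lemma IsMaximalPacking.exists_tight (hf : IsMaximalPacking (cycleGraph n) f) {v x' : Fin n}
    (hv : 1 ≤ f v) (hx' : 1 ≤ f x') (hx'v : x' ≠ v) :
    ∃ x, x ≠ v ∧ 1 ≤ f x ∧ ((x - v).val = f v + f x + 1 ∨ (v - x).val = f x + f v + 1) := by
  have := hf.1.add_add_one_le_val_sub hx'v.symm hv hx'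
  have := hf.1.add_add_one_le_val_sub hx'v hx' hv
  have := Fin.val_sub_add_val_sub_comm v x'
  obtain ⟨y, x, hxv, hx, hyx, hyv⟩ := hf.exists_conflict (v := v) (by rw [ecc_cycleGraph]; omega)
  refine ⟨x, hxv, hx, ?_⟩
  have hvx : (cycleGraph n).dist v x ≤ f v + f x + 1 := by
    have := cycleGraph_connected_of_neZero.dist_triangle (u := v) (v := y) (w := x)
    rw [SimpleGraph.dist_comm] at hyv
    omega
  rw [dist_cycleGraph] at hvx
  have := hf.1.add_add_one_le_val_sub hxv.symm hv hx
  have := hf.1.add_add_one_le_val_sub hxv hx hv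
  omega

lemma IsMaximalPacking.val_sub_succ_le_or (hf : IsMaximalPacking (cycleGraph n) f)
    {next : Fin n → Fin n}
    (hnext : ∀ v ∈ broadcastVertices f, IsCyclicSucc (broadcastVertices f) v (next v))
    {v x' : Fin n} (hv : 1 ≤ f v) (hx' : 1 ≤ f x') (hx'v : x' ≠ v) :
    (next v - v).val ≤ f v + f (next v) + 1 ∨
      ∃ u ∈ broadcastVertices f, next u = v ∧ (next u - u).val ≤ f u + f v + 1 := by
  obtain ⟨x, hxv, hx, h | h⟩ := hf.exists_tight hv hx' hx'v
  · have hvS := mem_broadcastVertices.2 hv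
    have := (hnext v hvS).unique (hf.1.isCyclicSucc_of_val_sub_le hxv hv hx h.le)
    subst this
    omega
  · have hxS := mem_broadcastVertices.2 hx
    have := (hnext x hxS).unique (hf.1.isCyclicSucc_of_val_sub_le hxv.symm hx hv h.le)
    exact Or.inr ⟨x, hxS, this, by rw [this]; omega⟩

theorem IsMaximalPacking.add_cost_mod_two_le_four_mul_cost (hn : 3 ≤ n)
    (hf : IsMaximalPacking (cycleGraph n) f) :
    n + cost f % 2 ≤ 4 * cost f := by
  rw [cost_eq_sum_broadcastVertices]
  set S := broadcastVertices f
  obtain ⟨v, hv⟩ := hf.broadcastVertices_nonempty (v := 0) (by rw [ecc_cycleGraph]; omega)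
  by_cases hsingle : ∃ x ∈ S, x ≠ v
  swap
  · push Not at hsingle
    have hS : S = {v} := eq_singleton_iff_unique_mem.2 ⟨hv, hsingle⟩
    rw [hS, sum_singleton, hf.apply_eq_ecc hS, ecc_cycleGraph]
    omega
  have hother : ∀ u ∈ S, ∃ x ∈ S, x ≠ u := by
    obtain ⟨x, hx, hxv⟩ := hsingle
    intro u _
    rcases eq_or_ne u v with rfl | huv
    exacts [⟨x, hx, hxv⟩, ⟨v, hv, huv.symm⟩]
  choose! next hnext using fun u hu => exists_isCyclicSucc (hother u hu)
  have hsum := sum_val_sub_succ (S := S) ⟨v, hv⟩ hnext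
  have := sum_add_sum_mod_two_le (g := fun u => (next u - u).val) (a := f)
    (fun u hu => (hnext u hu).1) (injOn_of_isCyclicSucc hnext)
    (fun u hu => mem_broadcastVertices.1 hu)
    (fun u hu => hf.val_sub_le_of_isCyclicSucc hn (mem_broadcastVertices.1 hu) (hnext u hu))
    fun u hu => by
      obtain ⟨x, hx, hxu⟩ := hother u hu
      rw [mem_broadcastVertices] at hu hx
      exact hf.val_sub_succ_le_or hnext hu hx hxu
  omega

end Cycle

section Construction

variable {n k : ℕ} {p : ℕ → ℕ}

/-- `p 0 < p 1 < ⋯ < p k` lists positions around `C_n`, with `p k = n` standing for `p 0` again: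
consecutive positions are 3, 4 or 5 apart, and every position borders a gap of length 3. -/
def IsGapPattern (n k : ℕ) (p : ℕ → ℕ) : Prop :=
  p 0 = 0 ∧ p k = n ∧ ∀ i < k, p i + 3 ≤ p (i + 1) ∧ p (i + 1) ≤ p i + 5 ∧
    (p (i + 1) = p i + 3 ∨ 0 < i ∧ p i = p (i - 1) + 3)

lemma IsGapPattern.add_three_le (hp : IsGapPattern n k p) {i j : ℕ} (hij : i < j) (hjk : j ≤ k) :
    p i + 3 ≤ p j := by
  induction j, hij using Nat.le_induction with
  | base => exact (hp.2.2 i (by omega)).1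
  | succ j hij ih =>
    have := (hp.2.2 j (by omega)).1
    have := ih (by omega)
    omega

lemma IsGapPattern.add_three_le_of_lt (hp : IsGapPattern n k p) {i : ℕ} (hi : i < k) :
    p i + 3 ≤ n :=
  hp.2.1 ▸ hp.add_three_le hi le_rfl

lemma IsGapPattern.exists_mem_Ico (hp : IsGapPattern n k p) {m : ℕ} (hm : m < n) :
    ∃ i < k, p i ≤ m ∧ m < p (i + 1) := by
  have hex : ∃ j, m < p j := ⟨k, hp.2.1 ▸ hm⟩
  have hk : Nat.find hex ≤ k := Nat.find_min' hex (hp.2.1 ▸ hm)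
  have h0 : Nat.find hex ≠ 0 := fun h => by
    have := Nat.find_spec hex
    rw [h, hp.1] at this
    omega
  refine ⟨Nat.find hex - 1, by omega, not_lt.1 (Nat.find_min hex (by omega)), ?_⟩
  rw [Nat.sub_add_cancel (Nat.one_le_iff_ne_zero.2 h0)]
  exact Nat.find_spec hex

variable [NeZero n]

lemma dist_natCast_le (a b : ℕ) :
    (cycleGraph n).dist (a : Fin n) (b : Fin n) ≤ a - b + (b - a) := by
  wlog hab : a ≤ b generalizing a b
  · rw [SimpleGraph.dist_comm]
    have := this b a (by omega)
    omega
  have hb : (a : Fin n) + ((b - a : ℕ) : Fin n) = b := by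
    ext
    rw [Fin.val_add, Fin.val_natCast, Fin.val_natCast, Fin.val_natCast, ← Nat.add_mod,
      Nat.add_sub_cancel' hab]
  have := dist_cycleGraph_add_natCast_le (a : Fin n) (b - a)
  rw [hb] at this
  omega

lemma dist_natCast {a b : ℕ} (ha : a < n) (hb : b < n) :
    (cycleGraph n).dist (a : Fin n) (b : Fin n) =
      min (a - b + (b - a)) (n - (a - b + (b - a))) := by
  have h₁ := Fin.val_sub_add_val_sub 0 (a : Fin n) (b : Fin n)
  have h₂ := Fin.val_sub_add_val_sub 0 (b : Fin n) (a : Fin n)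
  simp only [sub_zero, Fin.val_natCast, Nat.mod_eq_of_lt ha, Nat.mod_eq_of_lt hb] at h₁ h₂
  rw [dist_cycleGraph]
  omega

variable (n k p) in
def patternVertices : Finset (Fin n) :=
  (range k).image fun i => (p i : Fin n)

lemma IsGapPattern.val_natCast (hp : IsGapPattern n k p) {i : ℕ} (hi : i < k) :
    (p i : Fin n).val = p i :=
  Fin.val_cast_of_lt (by have := hp.add_three_le_of_lt hi; omega)

lemma IsGapPattern.natCast_mem (hp : IsGapPattern n k p) {j : ℕ} (hj : j ≤ k) :
    (p j : Fin n) ∈ patternVertices n k p := by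
  rcases hj.lt_or_eq with hj | rfl
  · exact mem_image_of_mem _ (mem_range.2 hj)
  · have hk : j ≠ 0 := by
      rintro rfl
      exact NeZero.ne n (hp.2.1 ▸ hp.1)
    refine mem_image.2 ⟨0, mem_range.2 (by omega), ?_⟩
    rw [hp.1, hp.2.1, Fin.natCast_self, Nat.cast_zero]

lemma IsGapPattern.natCast_succ_ne (hp : IsGapPattern n k p) (hk : 2 ≤ k) {i : ℕ} (hi : i < k) :
    (p (i + 1) : Fin n) ≠ p i := by
  intro h
  rcases Nat.lt_or_ge (i + 1) k with hik | hik
  · have := congrArg Fin.val h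
    rw [hp.val_natCast hik, hp.val_natCast hi] at this
    have := (hp.2.2 i hi).1
    omega
  · rw [show i + 1 = k by omega, hp.2.1, Fin.natCast_self] at h
    have := congrArg Fin.val h
    rw [Fin.val_zero, hp.val_natCast hi] at this
    have := hp.add_three_le (i := 0) (j := i) (by omega) (by omega)
    rw [hp.1] at this
    omega

lemma IsGapPattern.card_patternVertices (hp : IsGapPattern n k p) :
    #(patternVertices n k p) = k := by
  refine (card_image_of_injOn fun i hi j hj h => ?_).trans (card_range k)
  have := congrArg Fin.val h
  simp only [coe_range, Set.mem_Iio] at hi hj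
  rw [hp.val_natCast hi, hp.val_natCast hj] at this
  by_contra hij
  rcases Nat.lt_or_gt_of_ne hij with hij | hij
  · have := hp.add_three_le hij hj.le
    omega
  · have := hp.add_three_le hij hi.le
    omega

lemma IsGapPattern.three_le_dist (hp : IsGapPattern n k p) {x y : Fin n}
    (hx : x ∈ patternVertices n k p) (hy : y ∈ patternVertices n k p) (hxy : x ≠ y) :
    3 ≤ (cycleGraph n).dist x y := by
  obtain ⟨i, hi, rfl⟩ := mem_image.1 hx
  obtain ⟨j, hj, rfl⟩ := mem_image.1 hy
  rw [mem_range] at hi hj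
  have hij : i ≠ j := by
    rintro rfl
    exact hxy rfl
  have := hp.add_three_le_of_lt hi
  have := hp.add_three_le_of_lt hj
  rw [dist_natCast (by omega) (by omega)]
  rcases Nat.lt_or_gt_of_ne hij with h | h
  · have := hp.add_three_le h hj.le
    omega
  · have := hp.add_three_le h hi.le
    omega

lemma IsGapPattern.exists_near (hp : IsGapPattern n k p) {y : Fin n}
    (hy : y ∉ patternVertices n k p) :
    ∃ w ∈ patternVertices n k p,
      ∃ t, (cycleGraph n).dist t y ≤ 1 ∧ (cycleGraph n).dist t w ≤ 1 := by
  obtain ⟨m, hm, rfl⟩ : ∃ m < n, (m : Fin n) = y := ⟨y.val, y.isLt, Fin.cast_val_eq_self y⟩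
  obtain ⟨i, hi, hpi, hpi'⟩ := hp.exists_mem_Ico hm
  have hne : p i ≠ m := fun h => hy (h ▸ hp.natCast_mem hi.le)
  have := (hp.2.2 i hi).2.1
  by_cases hmi : m ≤ p i + 2
  · refine ⟨p i, hp.natCast_mem hi.le, (p i + 1 : ℕ), ?_, ?_⟩ <;>
      refine (dist_natCast_le _ _).trans ?_ <;> omega
  · refine ⟨p (i + 1), hp.natCast_mem hi, (p (i + 1) - 1 : ℕ), ?_, ?_⟩ <;>
      refine (dist_natCast_le _ _).trans ?_ <;> omega

lemma IsGapPattern.exists_pair (hp : IsGapPattern n k p) (hk : 2 ≤ k) {y : Fin n}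
    (hy : y ∈ patternVertices n k p) :
    ∃ w ∈ patternVertices n k p, w ≠ y ∧
      ∃ t, (cycleGraph n).dist t y ≤ 2 ∧ (cycleGraph n).dist t w ≤ 1 := by
  obtain ⟨i, hi, rfl⟩ := mem_image.1 hy
  rw [mem_range] at hi
  obtain ⟨-, -, h | ⟨hi0, h⟩⟩ := hp.2.2 i hi
  · refine ⟨p (i + 1), hp.natCast_mem hi, hp.natCast_succ_ne hk hi, (p i + 2 : ℕ), ?_, ?_⟩ <;>
      refine (dist_natCast_le _ _).trans ?_ <;> omega
  · have hne := hp.natCast_succ_ne hk (i := i - 1) (by omega)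
    rw [Nat.sub_add_cancel hi0] at hne
    refine ⟨p (i - 1), hp.natCast_mem (by omega), hne.symm, (p (i - 1) + 1 : ℕ), ?_, ?_⟩ <;>
      refine (dist_natCast_le _ _).trans ?_ <;> omega

theorem IsGapPattern.isMaximalPacking (hp : IsGapPattern n k p) (hk : 2 ≤ k) :
    IsMaximalPacking (cycleGraph n) fun v => if v ∈ patternVertices n k p then 1 else 0 := by
  have := hp.add_three_le_of_lt (i := 0) (by omega)
  refine isMaximalPacking_indicator cycleGraph_connected_of_neZero _ (fun v _ => ?_)
    (fun x hx y hy => hp.three_le_dist hx hy) (fun y => hp.exists_near) (fun y => hp.exists_pair hk)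
  rw [ecc_cycleGraph]
  omega

end Construction

/-- Positions with `z` gaps of length 3, then `b` pairs of gaps `3, 4`, then pairs of
gaps `3, 5`. -/
def gapPattern (z b i : ℕ) : ℕ :=
  if i < z then 3 * i
  else if i < z + 2 * b then 3 * z + 7 * ((i - z) / 2) + 3 * ((i - z) % 2)
  else 3 * z + 7 * b + 8 * ((i - z - 2 * b) / 2) + 3 * ((i - z - 2 * b) % 2)

lemma isGapPattern_gapPattern (z b c : ℕ) :
    IsGapPattern (3 * z + 7 * b + 8 * c) (z + 2 * b + 2 * c) (gapPattern z b) := by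
  refine ⟨?_, ?_, fun i hi => ?_⟩ <;> unfold gapPattern <;> split_ifs <;> omega

lemma exists_eq_three_mul_add_seven_mul_add_eight_mul {n : ℕ} (hn : 6 ≤ n) :
    ∃ z b c, n = 3 * z + 7 * b + 8 * c ∧ 2 ≤ z + 2 * b + 2 * c ∧
      4 * (z + 2 * b + 2 * c) + (z + 2 * b + 2 * c) % 2 ≤ n + 4 := by
  have := Nat.div_add_mod n 8
  have : n % 8 < 8 := Nat.mod_lt n (by omega)
  interval_cases h : n % 8
  · exact ⟨0, 0, n / 8, by omega, by omega, by omega⟩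
  · exact ⟨3, 0, n / 8 - 1, by omega, by omega, by omega⟩
  · exact ⟨1, 1, n / 8 - 1, by omega, by omega, by omega⟩
  · exact ⟨1, 0, n / 8, by omega, by omega, by omega⟩
  · exact ⟨4, 0, n / 8 - 1, by omega, by omega, by omega⟩
  · exact ⟨2, 1, n / 8 - 1, by omega, by omega, by omega⟩
  · exact ⟨2, 0, n / 8, by omega, by omega, by omega⟩
  · exact ⟨0, 1, n / 8, by omega, by omega, by omega⟩

theorem exists_isMaximalPacking_cycleGraph {n : ℕ} [NeZero n] (hn : 3 ≤ n) :
    ∃ f, IsMaximalPacking (cycleGraph n) f ∧ 4 * cost f + cost f % 2 ≤ n + 4 := by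
  by_cases hsmall : n ≤ 5
  · refine ⟨_, isMaximalPacking_single (v := 0) (by rw [ecc_cycleGraph]; omega), ?_⟩
    rw [cost_single, ecc_cycleGraph]
    omega
  · obtain ⟨z, b, c, rfl, hk, hcost⟩ :=
      exists_eq_three_mul_add_seven_mul_add_eight_mul (n := n) (by omega)
    refine ⟨_, (isGapPattern_gapPattern z b c).isMaximalPacking hk, ?_⟩
    rwa [cost_indicator, (isGapPattern_gapPattern z b c).card_patternVertices]

end Broadcast

open Broadcast in
/-- For every integer n ≥ 3: p_b(C_n) = n/4 if n ≡ 0 (mod 8);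
p_b(C_n) = 2⌊n/8⌋ + 1 if n ≡ 1, 2, 3 (mod 8);
p_b(C_n) = 2⌊n/8⌋ + 2 if n ≡ 4, 5, 6, 7 (mod 8). -/
theorem lowerBroadcastPacking_cycleGraph (n : ℕ) (hn : 3 ≤ n) :
    (n % 8 = 0 → lowerBroadcastPacking (SimpleGraph.cycleGraph n) = n / 4) ∧
    (n % 8 = 1 ∨ n % 8 = 2 ∨ n % 8 = 3 →
      lowerBroadcastPacking (SimpleGraph.cycleGraph n) = 2 * (n / 8) + 1) ∧
    (n % 8 = 4 ∨ n % 8 = 5 ∨ n % 8 = 6 ∨ n % 8 = 7 →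
      lowerBroadcastPacking (SimpleGraph.cycleGraph n) = 2 * (n / 8) + 2) := by
  have : NeZero n := ⟨by omega⟩
  obtain ⟨f, hf, hcost⟩ := exists_isMaximalPacking_cycleGraph hn
  obtain ⟨g, hg, hcost_g⟩ := exists_cost_eq_lowerBroadcastPacking hf
  have hle := lowerBroadcastPacking_le hf
  have hlower := hg.add_cost_mod_two_le_four_mul_cost hn
  rw [hcost_g] at hlower
  refine ⟨fun h => ?_, fun h => ?_, fun h => ?_⟩ <;> omega
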